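/- Let 0 < δ < 1, α_1 = 0 and α_l = 1 − l^{−δ} for l ≥ 2, and θ_{j,l} = (1−α_j)·Π_{i=j+1}^{l} α_i (with θ_{l,l} = 1−α_l). Then there exists a constant L_0 such that for all l ≥ L_0, Σ_{j=1}^{l} θ_{j,l}² ≤ 5(log l)²/l^{δ}. -/

import Mathlib

open Finset Real Filter

/-- The weight `α_l = 1 − l^{−δ}` (note `α_1 = 0`). -/
noncomputable def alphaWt (δ : ℝ) (l : ℕ) : ℝ := 1 - (l : ℝ) ^ (-δ)

/-- The expansion weight `θ_{j,l} = (1 − α_j)·Π_{i=j+1}^{l} α_i` (so `θ_{l,l} = 1 − α_l`). -/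
noncomputable def thetaWt (δ : ℝ) (j l : ℕ) : ℝ :=
  (1 - alphaWt δ j) * ∏ i ∈ Finset.Icc (j + 1) l, alphaWt δ i

/-!
The weights θ_{·,l} are nonnegative and sum to 1, since α_1 = 0; hence
Σ θ_{j,l}² ≤ max_j θ_{j,l}, and it suffices to show θ_{j,l} ≤ 2 l^{-δ} for large l.
For j ≥ l/2 this follows from θ_{j,l} ≤ j^{-δ}. For j < l/2 the product has at least l/2
factors, each at most 1 − l^{-δ} ≤ exp(−l^{-δ}), so θ_{j,l} ≤ exp(−l^{1−δ}/2), which is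
eventually below l^{-δ} because log l = o(l^{1−δ}).
-/

theorem sum_one_sub_mul_prod_Icc (a : ℕ → ℝ) (l : ℕ) :
    ∑ j ∈ Icc 1 l, (1 - a j) * ∏ i ∈ Icc (j + 1) l, a i = 1 - ∏ i ∈ Icc 1 l, a i := by
  induction l with
  | zero => simp
  | succ l ih =>
    have hstep : ∀ j ∈ Icc 1 l, (1 - a j) * ∏ i ∈ Icc (j + 1) (l + 1), a i
        = (1 - a j) * (∏ i ∈ Icc (j + 1) l, a i) * a (l + 1) := by
      intro j hj
      rw [prod_Icc_succ_top (by simp only [mem_Icc] at hj; omega), mul_assoc]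
    rw [sum_Icc_succ_top (by omega), sum_congr rfl hstep, ← sum_mul, ih,
      prod_Icc_succ_top (a := 1) (by omega), Icc_eq_empty (a := l + 1 + 1) (by omega), prod_empty]
    ring

theorem prod_le_exp_neg_mul_card {ι : Type*} {s : Finset ι} {a : ι → ℝ} {c : ℝ}
    (h0 : ∀ i ∈ s, 0 ≤ a i) (hc : ∀ i ∈ s, a i ≤ 1 - c) :
    ∏ i ∈ s, a i ≤ exp (-(c * #s)) := by
  calc ∏ i ∈ s, a i ≤ ∏ _i ∈ s, exp (-c) :=
        prod_le_prod h0 fun i hi => (hc i hi).trans (one_sub_le_exp_neg c)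
    _ = exp (-(c * #s)) := by rw [prod_const, ← exp_nat_mul]; ring_nf

theorem sum_sq_le_of_le_of_sum_eq_one {ι : Type*} {s : Finset ι} {w : ι → ℝ} {M : ℝ}
    (h0 : ∀ i ∈ s, 0 ≤ w i) (hM : ∀ i ∈ s, w i ≤ M) (h1 : ∑ i ∈ s, w i = 1) :
    ∑ i ∈ s, w i ^ 2 ≤ M := by
  calc ∑ i ∈ s, w i ^ 2 ≤ ∑ i ∈ s, M * w i :=
        sum_le_sum fun i hi => by rw [sq]; exact mul_le_mul_of_nonneg_right (hM i hi) (h0 i hi)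
    _ = M := by rw [← mul_sum, h1, mul_one]

theorem eventually_exp_neg_rpow_le_rpow_neg {δ : ℝ} (hδ : δ < 1) :
    ∀ᶠ x : ℝ in atTop, exp (-(x ^ (1 - δ) / 2)) ≤ x ^ (-δ) := by
  have hlittle := (isLittleO_log_rpow_atTop (sub_pos.mpr hδ)).bound (c := 1 / 2) (by norm_num)
  filter_upwards [hlittle, eventually_ge_atTop 1] with x hx hx1
  have hlog : 0 ≤ log x := log_nonneg hx1
  rw [norm_of_nonneg hlog, norm_of_nonneg (rpow_nonneg (by linarith) _)] at hx
  rw [rpow_def_of_pos (by linarith : 0 < x) (-δ), exp_le_exp]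
  nlinarith

section Weights

variable {δ : ℝ}

theorem one_sub_alphaWt (δ : ℝ) (j : ℕ) : 1 - alphaWt δ j = (j : ℝ) ^ (-δ) :=
  sub_sub_cancel _ _

theorem alphaWt_le_one (δ : ℝ) (i : ℕ) : alphaWt δ i ≤ 1 :=
  sub_le_self _ (rpow_nonneg (Nat.cast_nonneg i) _)

theorem alphaWt_le_one_sub_rpow_neg (hδ : 0 ≤ δ) {i l : ℕ} (hi : 1 ≤ i) (hil : i ≤ l) :
    alphaWt δ i ≤ 1 - (l : ℝ) ^ (-δ) :=
  sub_le_sub_left (rpow_le_rpow_of_nonpos (by exact_mod_cast hi) (by exact_mod_cast hil)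
    (neg_nonpos.mpr hδ)) 1

theorem alphaWt_nonneg (hδ : 0 ≤ δ) {i : ℕ} (hi : 1 ≤ i) : 0 ≤ alphaWt δ i :=
  sub_nonneg.mpr (rpow_le_one_of_one_le_of_nonpos (by exact_mod_cast hi) (neg_nonpos.mpr hδ))

theorem prod_alphaWt_nonneg (hδ : 0 ≤ δ) (j l : ℕ) :
    0 ≤ ∏ i ∈ Icc (j + 1) l, alphaWt δ i :=
  prod_nonneg fun i hi => alphaWt_nonneg hδ (by simp only [mem_Icc] at hi; omega)

theorem thetaWt_nonneg (hδ : 0 ≤ δ) (j l : ℕ) : 0 ≤ thetaWt δ j l :=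
  mul_nonneg ((one_sub_alphaWt δ j).symm ▸ rpow_nonneg (Nat.cast_nonneg j) _)
    (prod_alphaWt_nonneg hδ j l)

theorem sum_thetaWt_eq_one (δ : ℝ) {l : ℕ} (hl : 1 ≤ l) :
    ∑ j ∈ Icc 1 l, thetaWt δ j l = 1 := by
  have halpha_one : alphaWt δ 1 = 0 := by simp [alphaWt]
  simp only [thetaWt]
  rw [sum_one_sub_mul_prod_Icc,
    prod_eq_zero (mem_Icc.mpr ⟨le_rfl, hl⟩) halpha_one, sub_zero]

theorem thetaWt_le_prod (hδ : 0 ≤ δ) {j : ℕ} (hj : 1 ≤ j) (l : ℕ) :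
    thetaWt δ j l ≤ ∏ i ∈ Icc (j + 1) l, alphaWt δ i := by
  rw [thetaWt, one_sub_alphaWt]
  exact mul_le_of_le_one_left (prod_alphaWt_nonneg hδ j l)
    (rpow_le_one_of_one_le_of_nonpos (by exact_mod_cast hj) (neg_nonpos.mpr hδ))

theorem thetaWt_le_rpow_neg (hδ : 0 ≤ δ) (j l : ℕ) : thetaWt δ j l ≤ (j : ℝ) ^ (-δ) := by
  rw [thetaWt, one_sub_alphaWt]
  exact mul_le_of_le_one_right (rpow_nonneg (Nat.cast_nonneg j) _)
    (prod_le_one (fun i hi => alphaWt_nonneg hδ (by simp only [mem_Icc] at hi; omega))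
      fun i _ => alphaWt_le_one δ i)

theorem thetaWt_le_of_le_two_mul (hδ0 : 0 ≤ δ) (hδ1 : δ ≤ 1) {j l : ℕ} (hj : 1 ≤ j)
    (hjl : j ≤ l) (hlj : l ≤ 2 * j) : thetaWt δ j l ≤ 2 * (l : ℝ) ^ (-δ) := by
  have hl : (0 : ℝ) < l / 2 := by
    have : (1 : ℝ) ≤ l := by exact_mod_cast hj.trans hjl
    linarith
  have htwo : (2 : ℝ) ^ δ ≤ 2 := by
    simpa using rpow_le_rpow_of_exponent_le (by norm_num : (1 : ℝ) ≤ 2) hδ1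
  calc thetaWt δ j l ≤ (j : ℝ) ^ (-δ) := thetaWt_le_rpow_neg hδ0 j l
    _ ≤ ((l : ℝ) / 2) ^ (-δ) :=
        rpow_le_rpow_of_nonpos hl (by rw [div_le_iff₀ two_pos, mul_comm]; exact_mod_cast hlj)
          (neg_nonpos.mpr hδ0)
    _ = 2 ^ δ * (l : ℝ) ^ (-δ) := by
        rw [div_rpow (by positivity) zero_le_two, rpow_neg zero_le_two, div_inv_eq_mul, mul_comm]
    _ ≤ 2 * (l : ℝ) ^ (-δ) := by gcongr

theorem thetaWt_le_exp_of_two_mul_le (hδ : 0 ≤ δ) {j l : ℕ} (hj : 1 ≤ j) (hjl : 2 * j ≤ l) :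
    thetaWt δ j l ≤ exp (-((l : ℝ) ^ (1 - δ) / 2)) := by
  have hl : (0 : ℝ) < l := by exact_mod_cast (by omega : 0 < l)
  have hcard : ((#(Icc (j + 1) l) : ℕ) : ℝ) = l - j := by
    rw [Nat.card_Icc, Nat.cast_sub (by omega)]; push_cast; ring
  have hhalf : (l : ℝ) / 2 ≤ l - j := by
    have : (2 * j : ℝ) ≤ l := by exact_mod_cast hjl
    linarith
  calc thetaWt δ j l ≤ ∏ i ∈ Icc (j + 1) l, alphaWt δ i := thetaWt_le_prod hδ hj l
    _ ≤ exp (-((l : ℝ) ^ (-δ) * #(Icc (j + 1) l))) :=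
        prod_le_exp_neg_mul_card
          (fun i hi => alphaWt_nonneg hδ (by simp only [mem_Icc] at hi; omega))
          (fun i hi => alphaWt_le_one_sub_rpow_neg hδ (by simp only [mem_Icc] at hi; omega)
            (by simp only [mem_Icc] at hi; omega))
    _ ≤ exp (-((l : ℝ) ^ (1 - δ) / 2)) := by
        rw [exp_le_exp, neg_le_neg_iff, hcard, sub_eq_add_neg, rpow_add hl, rpow_one]
        calc (l : ℝ) * (l : ℝ) ^ (-δ) / 2 = (l : ℝ) ^ (-δ) * (l / 2) := by ring
          _ ≤ (l : ℝ) ^ (-δ) * (l - j) := by gcongr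

theorem thetaWt_le_two_mul_rpow_neg (hδ0 : 0 ≤ δ) (hδ1 : δ ≤ 1) {j l : ℕ} (hj : j ∈ Icc 1 l)
    (hexp : exp (-((l : ℝ) ^ (1 - δ) / 2)) ≤ (l : ℝ) ^ (-δ)) :
    thetaWt δ j l ≤ 2 * (l : ℝ) ^ (-δ) := by
  obtain ⟨hj1, hjl⟩ := mem_Icc.mp hj
  rcases le_or_gt l (2 * j) with hlj | hlj
  · exact thetaWt_le_of_le_two_mul hδ0 hδ1 hj1 hjl hlj
  · calc thetaWt δ j l ≤ exp (-((l : ℝ) ^ (1 - δ) / 2)) :=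
          thetaWt_le_exp_of_two_mul_le hδ0 hj1 hlj.le
      _ ≤ (l : ℝ) ^ (-δ) := hexp
      _ ≤ 2 * (l : ℝ) ^ (-δ) := by linarith [rpow_nonneg (Nat.cast_nonneg l) (-δ)]

end Weights

/-- For `0 < δ < 1`, there is a constant `L0` such that for all `l ≥ L0`,
`Σ_{j=1}^{l} θ_{j,l}² ≤ 5(log l)²/l^δ`. -/
theorem expansion_weights_sq_sum_bound (δ : ℝ) (hδ0 : 0 < δ) (hδ1 : δ < 1) :
    ∃ L0 : ℕ, ∀ l : ℕ, L0 ≤ l →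
      ∑ j ∈ Finset.Icc 1 l, (thetaWt δ j l) ^ 2
        ≤ 5 * (Real.log l) ^ 2 / (l : ℝ) ^ δ := by
  have hlog : ∀ᶠ l : ℕ in atTop, 1 ≤ log l :=
    (tendsto_log_atTop.comp tendsto_natCast_atTop_atTop).eventually_ge_atTop 1
  have hexp := tendsto_natCast_atTop_atTop.eventually (eventually_exp_neg_rpow_le_rpow_neg hδ1)
  obtain ⟨L0, hL0⟩ := eventually_atTop.mp (hlog.and (hexp.and (eventually_ge_atTop 1)))
  refine ⟨L0, fun l hl => ?_⟩
  obtain ⟨hlog1, hexpl, hl1⟩ := hL0 l hl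
  calc ∑ j ∈ Icc 1 l, thetaWt δ j l ^ 2 ≤ 2 * (l : ℝ) ^ (-δ) :=
        sum_sq_le_of_le_of_sum_eq_one (fun j _ => thetaWt_nonneg hδ0.le j l)
          (fun j hj => thetaWt_le_two_mul_rpow_neg hδ0.le hδ1.le hj hexpl)
          (sum_thetaWt_eq_one δ hl1)
    _ ≤ 5 * log l ^ 2 / (l : ℝ) ^ δ := by
        rw [rpow_neg (Nat.cast_nonneg l), ← div_eq_mul_inv]
        gcongr
        nlinarith
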